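/- Let a, b be natural numbers with 2 ≤ b ≤ a, let 0 ≤ i ≤ b−2, and set k′ = a−b+2+2i and n_{k′+1} = (k′+1+b−1−a)/2 = i+1. Then, in ℂ(q), λ(a, b−1, k′−1) + λ(a, b−1, k′+1) · [k′+1−n_{k′+1}]² / ( [k′+1]·[k′+2] ) = λ(a, b, k′); here all three triples (a, b−1, k′−1), (a, b−1, k′+1) and (a, b, k′) are admissible. -/
import Mathlib


/-- The `m`-th quantum integer `[m] = (q^m - q^{-m})/(q - q^{-1})` in `ℂ(q)`,
where `q` is the indeterminate of the field of rational functions. -/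
noncomputable def qInt (m : ℤ) : RatFunc ℂ :=
  (RatFunc.X ^ m - RatFunc.X ^ (-m)) / (RatFunc.X - RatFunc.X⁻¹)

/-- The quantum factorial `[s]! = ∏_{j=1}^{s} [j]`. -/
noncomputable def qFact (s : ℕ) : RatFunc ℂ := ∏ j ∈ Finset.Icc 1 s, qInt j

/-- A triple `(a,b,c)` of natural numbers is admissible if `a+b+c` is even and
`a+b ≥ c`, `b+c ≥ a`, `a+c ≥ b`. -/
def Admissible (a b c : ℕ) : Prop :=
  Even (a + b + c) ∧ c ≤ a + b ∧ a ≤ b + c ∧ b ≤ a + c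

/-- The Kauffman–Lins theta value
`θ(a,b,c) = [x]![y]![z]![x+y+z+1]! / ([x+y]![y+z]![x+z]!)` with
`x = (a+b−c)/2`, `y = (b+c−a)/2`, `z = (a+c−b)/2`. -/
noncomputable def thetaNet (a b c : ℕ) : RatFunc ℂ :=
  qFact ((a + b - c) / 2) * qFact ((b + c - a) / 2) * qFact ((a + c - b) / 2) *
      qFact ((a + b - c) / 2 + (b + c - a) / 2 + (a + c - b) / 2 + 1) /
    (qFact ((a + b - c) / 2 + (b + c - a) / 2) *
      qFact ((b + c - a) / 2 + (a + c - b) / 2) *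
      qFact ((a + b - c) / 2 + (a + c - b) / 2))

/-- `λ(a,b,k) = [k+1]/θ(a,b,k)`. -/
noncomputable def lam (a b k : ℕ) : RatFunc ℂ := qInt ((k : ℤ) + 1) / thetaNet a b k


lemma hX0 : (RatFunc.X : RatFunc ℂ) ≠ 0 := RatFunc.X_ne_zero

lemma Xpow_ne_one (n : ℕ) (hn : 0 < n) : (RatFunc.X : RatFunc ℂ) ^ n ≠ 1 := by
  intro h
  have : (algebraMap (Polynomial ℂ) (RatFunc ℂ)) (Polynomial.X ^ n) =
      (algebraMap (Polynomial ℂ) (RatFunc ℂ)) 1 := by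
    simpa [map_pow, RatFunc.algebraMap_X] using h
  have := RatFunc.algebraMap_injective ℂ |>.eq_iff.mp this
  have := congrArg Polynomial.natDegree this
  simp [Polynomial.natDegree_X_pow] at this
  omega

lemma hsub : (RatFunc.X : RatFunc ℂ) - RatFunc.X⁻¹ ≠ 0 := by
  intro h
  have hx : (RatFunc.X : RatFunc ℂ) = RatFunc.X⁻¹ := by linear_combination h
  have : (RatFunc.X : RatFunc ℂ) ^ 2 = 1 := by
    rw [sq]; nth_rewrite 2 [hx]; exact mul_inv_cancel₀ hX0
  exact Xpow_ne_one 2 (by norm_num) this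

lemma qInt_ne_zero (m : ℤ) (hm : m ≠ 0) : qInt m ≠ 0 := by
  rw [qInt]
  apply div_ne_zero _ hsub
  intro h
  have he : (RatFunc.X : RatFunc ℂ) ^ m = RatFunc.X ^ (-m) := by linear_combination h
  have h2 : (RatFunc.X : RatFunc ℂ) ^ (2 * m) = 1 := by
    rw [two_mul, zpow_add₀ hX0]
    nth_rewrite 2 [he]
    rw [← zpow_add₀ hX0, show m + -m = 0 by ring, zpow_zero]
  have h2' : (RatFunc.X : RatFunc ℂ) ^ (-(2 * m)) = 1 := by
    rw [zpow_neg, h2]; simp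
  rcases le_or_gt 0 m with h | h
  · have : (RatFunc.X : RatFunc ℂ) ^ ((2 * m).toNat) = 1 := by
      rw [← zpow_natCast, Int.toNat_of_nonneg (by omega)]; exact h2
    exact Xpow_ne_one _ (by omega) this
  · have : (RatFunc.X : RatFunc ℂ) ^ ((-(2 * m)).toNat) = 1 := by
      rw [← zpow_natCast, Int.toNat_of_nonneg (by omega)]; exact h2'
    exact Xpow_ne_one _ (by omega) this

lemma qFact_ne_zero (s : ℕ) : qFact s ≠ 0 := by
  rw [qFact]
  apply Finset.prod_ne_zero_iff.mpr
  intro j hj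
  simp only [Finset.mem_Icc] at hj
  exact qInt_ne_zero _ (by exact_mod_cast Nat.one_le_iff_ne_zero.mp hj.1)

lemma qFact_succ (n : ℕ) : qFact (n + 1) = qFact n * qInt ((n : ℤ) + 1) := by
  rw [qFact, qFact, Finset.prod_Icc_succ_top (by omega : 1 ≤ n + 1)]
  norm_cast

lemma qInt_mul_sub (m : ℤ) :
    qInt m * (RatFunc.X - RatFunc.X⁻¹) = RatFunc.X ^ m - RatFunc.X ^ (-m) :=
  div_mul_cancel₀ _ hsub

lemma qInt_key (m p r n s t : ℤ) (hn : n = m + p + r) (hs : s = m + r) (ht : t = m + p) :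
    qInt m * qInt n + qInt p * qInt r = qInt s * qInt t := by
  subst hn hs ht
  apply mul_right_cancel₀ (pow_ne_zero 2 hsub)
  have e : ∀ u v : ℤ, qInt u * qInt v * (RatFunc.X - RatFunc.X⁻¹) ^ 2 =
      (RatFunc.X ^ u - RatFunc.X ^ (-u)) * (RatFunc.X ^ v - RatFunc.X ^ (-v)) := by
    intro u v
    rw [← qInt_mul_sub u, ← qInt_mul_sub v]; ring
  rw [add_mul, e, e, e]
  simp only [sub_mul, mul_sub, ← zpow_add₀ hX0]
  ring_nf

lemma theta_eq (a b c x y z w u v t : ℕ) (hx : (a + b - c) / 2 = x)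
    (hy : (b + c - a) / 2 = y) (hz : (a + c - b) / 2 = z) (hw : x + y + z + 1 = w)
    (hu : x + y = u) (hv : y + z = v) (ht : x + z = t) :
    thetaNet a b c = qFact x * qFact y * qFact z * qFact w /
      (qFact u * qFact v * qFact t) := by
  rw [thetaNet, hx, hy, hz, hw, hu, hv, ht]

lemma core (d i j : ℕ) :
    lam (i+j+2+d) (i+j+1) (d+2*i+1) +
      lam (i+j+2+d) (i+j+1) (d+2*i+3) * qInt ((d:ℤ)+i+2) ^ 2 /
        (qInt ((d:ℤ)+2*i+3) * qInt ((d:ℤ)+2*i+4)) =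
    lam (i+j+2+d) (i+j+2) (d+2*i+2) := by
  have t1 : thetaNet (i+j+2+d) (i+j+1) (d+2*i+1) =
      qFact (j+1) * qFact i * qFact (d+i+1) * qFact (d+2*i+j+3) /
        (qFact (i+j+1) * qFact (d+2*i+1) * qFact (d+i+j+2)) :=
    theta_eq _ _ _ _ _ _ _ _ _ _ (by omega) (by omega) (by omega) (by omega)
      (by omega) (by omega) (by omega)
  have t2 : thetaNet (i+j+2+d) (i+j+1) (d+2*i+3) =
      qFact j * qFact (i+1) * qFact (d+i+2) * qFact (d+2*i+j+4) /
        (qFact (i+j+1) * qFact (d+2*i+3) * qFact (d+i+j+2)) :=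
    theta_eq _ _ _ _ _ _ _ _ _ _ (by omega) (by omega) (by omega) (by omega)
      (by omega) (by omega) (by omega)
  have t3 : thetaNet (i+j+2+d) (i+j+2) (d+2*i+2) =
      qFact (j+1) * qFact (i+1) * qFact (d+i+1) * qFact (d+2*i+j+4) /
        (qFact (i+j+2) * qFact (d+2*i+2) * qFact (d+i+j+2)) :=
    theta_eq _ _ _ _ _ _ _ _ _ _ (by omega) (by omega) (by omega) (by omega)
      (by omega) (by omega) (by omega)
  have e3 : qFact (d+i+2) = qFact (d+i+1) * qInt ((d:ℤ)+i+2) := by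
    rw [show d+i+2 = (d+i+1)+1 by omega, qFact_succ]; push_cast; ring_nf
  have e4 : qFact (d+2*i+j+4) = qFact (d+2*i+j+3) * qInt ((d:ℤ)+2*i+j+4) := by
    rw [show d+2*i+j+4 = (d+2*i+j+3)+1 by omega, qFact_succ]; push_cast; ring_nf
  have e5 : qFact (i+j+2) = qFact (i+j+1) * qInt ((i:ℤ)+j+2) := by
    rw [show i+j+2 = (i+j+1)+1 by omega, qFact_succ]; push_cast; ring_nf
  have e6 : qFact (d+2*i+2) = qFact (d+2*i+1) * qInt ((d:ℤ)+2*i+2) := by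
    rw [show d+2*i+2 = (d+2*i+1)+1 by omega, qFact_succ]; push_cast; ring_nf
  have e7 : qFact (d+2*i+3) = qFact (d+2*i+1) * qInt ((d:ℤ)+2*i+2) * qInt ((d:ℤ)+2*i+3) := by
    rw [show d+2*i+3 = (d+2*i+2)+1 by omega, qFact_succ, e6]; push_cast; ring_nf
  rw [lam, lam, lam, t1, t2, t3, qFact_succ j, qFact_succ i, e3, e4, e5, e6, e7]
  push_cast
  rw [show ((d:ℤ) + 2*(i:ℤ) + 1 + 1) = (d:ℤ)+2*(i:ℤ)+2 by ring,
     show ((d:ℤ) + 2*(i:ℤ) + 3 + 1) = (d:ℤ)+2*(i:ℤ)+4 by ring,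
     show ((d:ℤ) + 2*(i:ℤ) + 2 + 1) = (d:ℤ)+2*(i:ℤ)+3 by ring]
  have hkey := qInt_key ((i:ℤ)+1) ((d:ℤ)+(i:ℤ)+2) ((j:ℤ)+1) ((d:ℤ)+2*(i:ℤ)+(j:ℤ)+4)
    ((i:ℤ)+(j:ℤ)+2) ((d:ℤ)+2*(i:ℤ)+3) (by ring) (by ring) (by ring)
  set P := qFact j
  set Q := qFact i
  set R := qFact (d+i+1)
  set S := qFact (d+2*i+j+3)
  set T := qFact (i+j+1)
  set U := qFact (d+2*i+1)
  set V := qFact (d+i+j+2)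
  set c1 := qInt ((j:ℤ)+1) with hc1
  set c2 := qInt ((i:ℤ)+1) with hc2
  set c3 := qInt ((d:ℤ)+(i:ℤ)+2) with hc3
  set c4 := qInt ((d:ℤ)+2*(i:ℤ)+(j:ℤ)+4) with hc4
  set c5 := qInt ((i:ℤ)+(j:ℤ)+2) with hc5
  set c6 := qInt ((d:ℤ)+2*(i:ℤ)+2) with hc6
  set c7 := qInt ((d:ℤ)+2*(i:ℤ)+3) with hc7
  set c8 := qInt ((d:ℤ)+2*(i:ℤ)+4) with hc8
  have hP : P ≠ 0 := qFact_ne_zero j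
  have hQ : Q ≠ 0 := qFact_ne_zero i
  have hR : R ≠ 0 := qFact_ne_zero _
  have hS : S ≠ 0 := qFact_ne_zero _
  have hT : T ≠ 0 := qFact_ne_zero _
  have hU : U ≠ 0 := qFact_ne_zero _
  have hV : V ≠ 0 := qFact_ne_zero _
  have hn1 : c1 ≠ 0 := qInt_ne_zero _ (by positivity)
  have hn2 : c2 ≠ 0 := qInt_ne_zero _ (by positivity)
  have hn3 : c3 ≠ 0 := qInt_ne_zero _ (by positivity)
  have hn4 : c4 ≠ 0 := qInt_ne_zero _ (by positivity)
  have hn5 : c5 ≠ 0 := qInt_ne_zero _ (by positivity)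
  have hn6 : c6 ≠ 0 := qInt_ne_zero _ (by positivity)
  have hn7 : c7 ≠ 0 := qInt_ne_zero _ (by positivity)
  have hn8 : c8 ≠ 0 := qInt_ne_zero _ (by positivity)
  have nz : ∀ A B : RatFunc ℂ, A ≠ 0 → B ≠ 0 → A * B ≠ 0 := fun _ _ => mul_ne_zero
  have hD1 : P * c1 * Q * R * S ≠ 0 :=
    mul_ne_zero (mul_ne_zero (mul_ne_zero (mul_ne_zero hP hn1) hQ) hR) hS
  have hD2 : P * (Q * c2) * (R * c3) * (S * c4) * (c7 * c8) ≠ 0 :=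
    mul_ne_zero (mul_ne_zero (mul_ne_zero (mul_ne_zero hP (mul_ne_zero hQ hn2))
      (mul_ne_zero hR hn3)) (mul_ne_zero hS hn4)) (mul_ne_zero hn7 hn8)
  have hD3 : P * c1 * (Q * c2) * R * (S * c4) ≠ 0 :=
    mul_ne_zero (mul_ne_zero (mul_ne_zero (mul_ne_zero hP hn1) (mul_ne_zero hQ hn2)) hR)
      (mul_ne_zero hS hn4)
  rw [div_div_eq_mul_div, div_div_eq_mul_div, div_div_eq_mul_div,
    div_mul_eq_mul_div, div_div,
    div_add_div _ _ hD1 hD2,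
    div_eq_div_iff (mul_ne_zero hD1 hD2) hD3]
  linear_combination (P*Q*R*S*T*U*V*c3*c6*c7*c8*(P*c1*Q*c2*R*S*c4)) * hkey

/-- For `2 ≤ b ≤ a`, `0 ≤ i ≤ b−2` and `k′ = a−b+2+2i` (with `n_{k′+1} = i+1`):
the triples `(a, b−1, k′−1)`, `(a, b−1, k′+1)`, `(a, b, k′)` are admissible, and
`λ(a, b−1, k′−1) + λ(a, b−1, k′+1)·[k′+1−n_{k′+1}]²/([k′+1]·[k′+2]) = λ(a, b, k′)`. -/
theorem lam_recursion (a b i : ℕ) (hb2 : 2 ≤ b) (hba : b ≤ a) (hi : i ≤ b - 2) :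
    Admissible a (b - 1) (a - b + 2 + 2 * i - 1) ∧
    Admissible a (b - 1) (a - b + 2 + 2 * i + 1) ∧
    Admissible a b (a - b + 2 + 2 * i) ∧
    lam a (b - 1) (a - b + 2 + 2 * i - 1) +
        lam a (b - 1) (a - b + 2 + 2 * i + 1) *
          qInt (((a - b + 2 + 2 * i : ℕ) : ℤ) + 1 - (i + 1)) ^ 2 /
            (qInt (((a - b + 2 + 2 * i : ℕ) : ℤ) + 1) *
              qInt (((a - b + 2 + 2 * i : ℕ) : ℤ) + 2)) =
      lam a b (a - b + 2 + 2 * i) := by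
  obtain ⟨d, rfl⟩ : ∃ d, a = b + d := ⟨a - b, by omega⟩
  obtain ⟨j, rfl⟩ : ∃ j, b = i + 2 + j := ⟨b - 2 - i, by omega⟩
  rw [show i + 2 + j = i + j + 2 by omega]
  refine ⟨⟨Nat.even_iff.mpr (by omega), by omega, by omega, by omega⟩,
    ⟨Nat.even_iff.mpr (by omega), by omega, by omega, by omega⟩,
    ⟨Nat.even_iff.mpr (by omega), by omega, by omega, by omega⟩, ?_⟩
  rw [show i + j + 2 + d - (i + j + 2) + 2 + 2 * i - 1 = d + 2 * i + 1 by omega,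
    show i + j + 2 + d - (i + j + 2) + 2 + 2 * i + 1 = d + 2 * i + 3 by omega,
    show i + j + 2 + d - (i + j + 2) + 2 + 2 * i = d + 2 * i + 2 by omega,
    show i + j + 2 - 1 = i + j + 1 by omega,
    show ((d + 2 * i + 2 : ℕ) : ℤ) + 1 - ((i : ℤ) + 1) = (d:ℤ) + (i:ℤ) + 2 by push_cast; ring,
    show ((d + 2 * i + 2 : ℕ) : ℤ) + 1 = (d:ℤ) + 2 * (i:ℤ) + 3 by push_cast; ring,
    show ((d + 2 * i + 2 : ℕ) : ℤ) + 2 = (d:ℤ) + 2 * (i:ℤ) + 4 by push_cast; ring]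
  exact core d i j
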